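/- For any real b, any η > 0, and any random variable W with W ≤ b almost surely and finite second moment, E exp(η(W − EW − η φ(ηb) E[W²])) ≤ 1, where φ(t) = (e^t − 1 − t)/t² (with φ(0) = 1/2). -/

import Mathlib

/-!
The function `φ(t) = (eᵗ - 1 - t) / t²` is the Taylor remainder `∫₀¹ (1 - s) e^{st} ds`, hence
nondecreasing, and `eˣ = 1 + x + x² φ(x)`. For `x ≤ t` this gives `eˣ ≤ 1 + x + x² φ(t)`. Applied
to `X = ηW ≤ ηb` and integrated, `E e^X ≤ 1 + E X + φ(ηb) E X² ≤ exp (E X + φ(ηb) E X²)`.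
-/

open MeasureTheory Real

noncomputable section

def bernsteinPhi (t : ℝ) : ℝ :=
  if t = 0 then 1 / 2 else (exp t - 1 - t) / t ^ 2

lemma bernsteinPhi_eq_integral (t : ℝ) :
    bernsteinPhi t = ∫ s in (0 : ℝ)..1, (1 - s) * exp (s * t) := by
  unfold bernsteinPhi
  split_ifs with ht
  · simp only [ht, mul_zero, exp_zero, mul_one]
    rw [intervalIntegral.integral_sub intervalIntegrable_const
      intervalIntegral.intervalIntegrable_id, integral_id]
    norm_num
  · have hderiv : ∀ s ∈ Set.uIcc (0 : ℝ) 1,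
        HasDerivAt (fun s => exp (s * t) * ((1 - s) / t + 1 / t ^ 2))
          ((1 - s) * exp (s * t)) s := by
      intro s _
      have hexp : HasDerivAt (fun s : ℝ => exp (s * t)) (exp (s * t) * t) s := by
        simpa using ((hasDerivAt_id s).mul_const t).exp
      have hlin : HasDerivAt (fun s : ℝ => (1 - s) / t + 1 / t ^ 2) (-1 / t) s := by
        simpa using (((hasDerivAt_id s).const_sub 1).div_const t).add_const (1 / t ^ 2)
      refine (hexp.mul hlin).congr_deriv ?_
      field_simp
      ring
    rw [intervalIntegral.integral_eq_sub_of_hasDerivAt hderiv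
      (by apply Continuous.intervalIntegrable; fun_prop)]
    field_simp
    simp only [mul_zero, exp_zero]
    ring

lemma monotone_bernsteinPhi : Monotone bernsteinPhi := by
  intro x t hxt
  simp only [bernsteinPhi_eq_integral]
  refine intervalIntegral.integral_mono_on zero_le_one
    (by apply Continuous.intervalIntegrable; fun_prop)
    (by apply Continuous.intervalIntegrable; fun_prop) fun s hs => ?_
  gcongr
  · linarith [hs.2]
  · exact hs.1

lemma exp_eq_one_add_add_sq_mul_bernsteinPhi (x : ℝ) :
    exp x = 1 + x + x ^ 2 * bernsteinPhi x := by
  unfold bernsteinPhi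
  split_ifs with hx
  · simp [hx]
  · field_simp
    ring

lemma exp_le_one_add_add_sq_mul_bernsteinPhi {x t : ℝ} (hxt : x ≤ t) :
    exp x ≤ 1 + x + x ^ 2 * bernsteinPhi t := by
  rw [exp_eq_one_add_add_sq_mul_bernsteinPhi x]
  gcongr
  exact monotone_bernsteinPhi hxt

lemma integral_exp_sub_le_one {Ω : Type*} [MeasurableSpace Ω] {μ : Measure Ω}
    [IsProbabilityMeasure μ] {X : Ω → ℝ} {c : ℝ} (hXc : ∀ᵐ ω ∂μ, X ω ≤ c)
    (hX : Integrable X μ) (hX2 : Integrable (fun ω => X ω ^ 2) μ) :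
    ∫ ω, exp (X ω - ∫ ω', X ω' ∂μ - bernsteinPhi c * ∫ ω', X ω' ^ 2 ∂μ) ∂μ ≤ 1 := by
  set a := ∫ ω', X ω' ∂μ + bernsteinPhi c * ∫ ω', X ω' ^ 2 ∂μ
  have hquad : Integrable (fun ω => 1 + X ω + bernsteinPhi c * X ω ^ 2) μ :=
    ((integrable_const 1).add hX).add (hX2.const_mul _)
  have hpointwise : ∀ᵐ ω ∂μ, exp (X ω) ≤ 1 + X ω + bernsteinPhi c * X ω ^ 2 := by
    filter_upwards [hXc] with ω hω
    linarith [exp_le_one_add_add_sq_mul_bernsteinPhi hω]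
  have hexp : Integrable (fun ω => exp (X ω)) μ :=
    hquad.mono' (continuous_exp.comp_aestronglyMeasurable hX.aestronglyMeasurable)
      (by simpa only [norm_of_nonneg (exp_nonneg _)] using hpointwise)
  have hmoment : ∫ ω, exp (X ω) ∂μ ≤ exp a :=
    calc ∫ ω, exp (X ω) ∂μ ≤ ∫ ω, (1 + X ω + bernsteinPhi c * X ω ^ 2) ∂μ :=
          integral_mono_ae hexp hquad hpointwise
      _ = a + 1 := by
          rw [integral_add (f := fun ω => 1 + X ω) ((integrable_const 1).add hX) (hX2.const_mul _),
            integral_add (f := fun _ => (1 : ℝ)) (integrable_const 1) hX, integral_const_mul]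
          simp only [integral_const, probReal_univ, smul_eq_mul, mul_one]
          ring
      _ ≤ exp a := add_one_le_exp a
  calc ∫ ω, exp (X ω - ∫ ω', X ω' ∂μ - bernsteinPhi c * ∫ ω', X ω' ^ 2 ∂μ) ∂μ
      = (∫ ω, exp (X ω) ∂μ) / exp a := by
        simp only [sub_sub, exp_sub, a]
        exact integral_div _ _
    _ ≤ 1 := (div_le_one (exp_pos a)).2 hmoment

end

/-- Bernstein-type exponential moment inequality: for `W ≤ b` a.s. with finite second moment,
`E exp(η(W − EW − η φ(ηb) E W²)) ≤ 1` where `φ(t) = (eᵗ − 1 − t)/t²`, `φ(0) = 1/2`. -/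
theorem stmt17 {Ω : Type*} [MeasurableSpace Ω] (μ : Measure Ω) [IsProbabilityMeasure μ]
    (W : Ω → ℝ) (b η : ℝ) (hη : 0 < η) (hb : ∀ᵐ x ∂μ, W x ≤ b)
    (hW : Integrable W μ) (hW2 : Integrable (fun x => (W x) ^ 2) μ) :
    (∫ x, Real.exp (η * (W x - (∫ y, W y ∂μ)
        - η * (if η * b = 0 then (1/2 : ℝ)
            else (Real.exp (η * b) - 1 - η * b) / (η * b) ^ 2) * ∫ y, (W y) ^ 2 ∂μ)) ∂μ)
      ≤ 1 := by
  have hηW : ∀ᵐ x ∂μ, η * W x ≤ η * b := by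
    filter_upwards [hb] with x hx
    exact mul_le_mul_of_nonneg_left hx hη.le
  have key := integral_exp_sub_le_one hηW (hW.const_mul η)
    (by simpa only [mul_pow] using hW2.const_mul (η ^ 2))
  simp only [mul_pow, integral_const_mul] at key
  convert key using 3 with x
  unfold bernsteinPhi
  congr 1
  ring
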